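/- Let V₁, V₂ be subspaces of ℝⁿ with dim V₁ = dim V₂, and let N be a symmetric positive definite matrix such that V₁ is an invariant subspace of N with N v = λ_min(N) v for all v ∈ V₁ (i.e. V₁ lies in the eigenspace of the smallest eigenvalue). Then ‖sin∠(V₂, V₁)‖ ≤ ‖sin∠(N^{1/2}V₂, N^{1/2}V₁)‖. -/

import Mathlib

noncomputable section
open Matrix

/-- Eigenvalues of a Hermitian matrix, sorted in ascending order. -/
noncomputable def sortedEig {n : ℕ} {M : Matrix (Fin n) (Fin n) ℝ} (hM : M.IsHermitian) :
    Fin n → ℝ :=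
  hM.eigenvalues ∘ Tuple.sort hM.eigenvalues

/-- The square root of a positive semidefinite matrix, as in the older Mathlib
(`Matrix.PosSemidef.sqrt`, since removed). -/
noncomputable def Matrix.PosSemidef.sqrt {n : Type*} [Fintype n] [DecidableEq n]
    {A : Matrix n n ℝ} (hA : A.PosSemidef) : Matrix n n ℝ :=
  hA.1.eigenvectorUnitary.1 * diagonal ((↑) ∘ (√·) ∘ hA.1.eigenvalues) *
    (star hA.1.eigenvectorUnitary : Matrix n n ℝ)

/-- Orthogonal projector onto a subspace, as a continuous linear map on the whole space. -/
noncomputable def projCLM {ι : Type*} [Fintype ι] (W : Submodule ℝ (EuclideanSpace ℝ ι)) :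
    EuclideanSpace ℝ ι →L[ℝ] EuclideanSpace ℝ ι :=
  W.subtypeL.comp (W.orthogonalProjectionOnto)

/-- ‖sin∠(V,W)‖ = ‖P_V (I − P_W)‖, the largest sine of canonical angles. -/
noncomputable def sinAngle {ι : Type*} [Fintype ι]
    (V W : Submodule ℝ (EuclideanSpace ℝ ι)) : ℝ :=
  ‖(projCLM V).comp (ContinuousLinearMap.id ℝ (EuclideanSpace ℝ ι) - projCLM W)‖

/-!
`T = N^{1/2}` acts on `V₁` as the scalar `μ = √λ_min(N)`, maps `V₁ᗮ` into itself, and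
`‖T x‖ ≥ μ ‖x‖` for all `x` since `N ≥ λ_min(N)`. Split `v ∈ V₂` as `v = a + b` with `a ∈ V₁`,
`b ∈ V₁ᗮ`; then `T v = μ a + T b`, so the sine of the angle between `T v` and `V₁` is
`‖T b‖ / (μ² ‖a‖² + ‖T b‖²)^{1/2}`, which is increasing in `‖T b‖` and, by `‖T b‖ ≥ μ ‖b‖`, at least
`‖b‖ / (‖a‖² + ‖b‖²)^{1/2}`, the sine of the angle between `v` and `V₁`. Since `T V₁ = V₁` and, after
taking adjoints, `sin∠(V, W)` is the largest such sine over `v ∈ V`, the inequality follows.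
-/

section OpNorm

variable {𝕜 E F : Type*} [RCLike 𝕜] [NormedAddCommGroup E] [InnerProductSpace 𝕜 E]
  [SeminormedAddCommGroup F] [NormedSpace 𝕜 F]

theorem ContinuousLinearMap.opNorm_comp_starProjection_le_iff (A : E →L[𝕜] F)
    (K : Submodule 𝕜 E) [K.HasOrthogonalProjection] {c : ℝ} (hc : 0 ≤ c) :
    ‖A ∘L K.starProjection‖ ≤ c ↔ ∀ v ∈ K, ‖A v‖ ≤ c * ‖v‖ := by
  constructor
  · intro h v hv
    calc ‖A v‖ = ‖(A ∘L K.starProjection) v‖ := by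
          rw [comp_apply, Submodule.starProjection_eq_self_iff.mpr hv]
      _ ≤ c * ‖v‖ := le_of_opNorm_le _ h v
  · intro h
    refine opNorm_le_bound _ hc fun x ↦ ?_
    calc ‖A (K.starProjection x)‖ ≤ c * ‖K.starProjection x‖ := h _ (K.starProjection_apply_mem x)
      _ ≤ c * ‖x‖ := by gcongr; exact K.norm_starProjection_apply_le x

end OpNorm

theorem Submodule.map_eq_self_of_forall_apply_eq_smul {K V : Type*} [Field K] [AddCommGroup V]
    [Module K V] {T : V →ₗ[K] V} {U : Submodule K V} {μ : K} (hμ : μ ≠ 0)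
    (h : ∀ u ∈ U, T u = μ • u) : U.map T = U := by
  refine le_antisymm ?_ fun u hu ↦ ⟨μ⁻¹ • u, U.smul_mem _ hu, ?_⟩
  · rintro _ ⟨u, hu, rfl⟩
    rw [h u hu]
    exact U.smul_mem μ hu
  · rw [h _ (U.smul_mem _ hu), smul_smul, mul_inv_cancel₀ hμ, one_smul]

section Real

variable {E : Type*} [NormedAddCommGroup E] [InnerProductSpace ℝ E] {T : E →ₗ[ℝ] E}

theorem LinearMap.IsSymmetric.apply_mem_orthogonal (hT : T.IsSymmetric) {U : Submodule ℝ E}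
    (hU : ∀ u ∈ U, T u ∈ U) {w : E} (hw : w ∈ Uᗮ) : T w ∈ Uᗮ := by
  rw [Submodule.mem_orthogonal] at hw ⊢
  intro u hu
  rw [← hT, hw _ (hU u hu)]

theorem LinearMap.IsPositive.apply_eq_smul_of_apply_apply_eq (hT : T.IsPositive) {μ : ℝ}
    (hμ : 0 < μ) {u : E} (h : T (T u) = μ ^ 2 • u) : T u = μ • u := by
  set w := T u - μ • u
  have hTw : T w = -μ • w := by
    simp only [w, map_sub, map_smul, h]
    module
  have hw : 0 ≤ -μ * ‖w‖ ^ 2 := by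
    simpa [hTw, real_inner_smul_left, real_inner_self_eq_norm_sq] using hT.inner_nonneg_left w
  have hw0 : ‖w‖ ^ 2 ≤ 0 := nonpos_of_mul_nonpos_right (by linarith) hμ
  simpa [w, sub_eq_zero] using hw0

variable {U V : Submodule ℝ E} [U.HasOrthogonalProjection]

theorem norm_starProjection_orthogonal_mul_norm_le {μ : ℝ} (hμ : 0 ≤ μ)
    (hTU : ∀ u ∈ U, T u = μ • u) (hTperp : ∀ w ∈ Uᗮ, T w ∈ Uᗮ)
    (hT : ∀ x, μ * ‖x‖ ≤ ‖T x‖) (v : E) :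
    ‖Uᗮ.starProjection v‖ * ‖T v‖ ≤ ‖Uᗮ.starProjection (T v)‖ * ‖v‖ := by
  set a := U.starProjection v
  set b := Uᗮ.starProjection v
  have ha : a ∈ U := U.starProjection_apply_mem v
  have hb : b ∈ Uᗮ := Uᗮ.starProjection_apply_mem v
  have hTv : T v = μ • a + T b := by
    rw [← U.starProjection_add_starProjection_orthogonal v, map_add, hTU a ha]
  have hPTv : U.starProjection (T v) = μ • a := by
    rw [hTv, map_add, U.starProjection_apply_eq_zero_iff.mpr (hTperp b hb), add_zero,
      Submodule.starProjection_eq_self_iff.mpr (U.smul_mem μ ha)]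
  have hQTv : Uᗮ.starProjection (T v) = T b := by
    rw [hTv, map_add, Submodule.starProjection_orthogonal_apply_eq_zero (U.smul_mem μ ha),
      zero_add, Submodule.starProjection_eq_self_iff.mpr (hTperp b hb)]
  have hv2 := U.norm_sq_eq_add_norm_sq_starProjection v
  have hTv2 := U.norm_sq_eq_add_norm_sq_starProjection (T v)
  rw [hPTv, hQTv, norm_smul, Real.norm_of_nonneg hμ] at hTv2
  rw [hQTv, ← pow_le_pow_iff_left₀ (by positivity) (by positivity) two_ne_zero, mul_pow,
    mul_pow, hv2, hTv2]
  have hTb : (μ * ‖b‖) ^ 2 ≤ ‖T b‖ ^ 2 := by gcongr; exact hT b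
  nlinarith [sq_nonneg ‖a‖]

theorem norm_starProjection_orthogonal_comp_le_map {μ : ℝ} (hμ : 0 < μ)
    (hTU : ∀ u ∈ U, T u = μ • u) (hTperp : ∀ w ∈ Uᗮ, T w ∈ Uᗮ) (hT : ∀ x, μ * ‖x‖ ≤ ‖T x‖)
    [V.HasOrthogonalProjection] [(V.map T).HasOrthogonalProjection] :
    ‖Uᗮ.starProjection ∘L V.starProjection‖ ≤ ‖Uᗮ.starProjection ∘L (V.map T).starProjection‖ := by
  set c := ‖Uᗮ.starProjection ∘L (V.map T).starProjection‖
  have hc := (Uᗮ.starProjection.opNorm_comp_starProjection_le_iff _ (norm_nonneg _)).mp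
    (le_refl c)
  refine (Uᗮ.starProjection.opNorm_comp_starProjection_le_iff _ (norm_nonneg _)).mpr
    fun v hv ↦ ?_
  rcases eq_or_ne v 0 with rfl | hv0
  · simp
  have hTv : 0 < ‖T v‖ := (mul_pos hμ (norm_pos_iff.mpr hv0)).trans_le (hT v)
  refine le_of_mul_le_mul_right ?_ hTv
  calc ‖Uᗮ.starProjection v‖ * ‖T v‖ ≤ ‖Uᗮ.starProjection (T v)‖ * ‖v‖ :=
        norm_starProjection_orthogonal_mul_norm_le hμ.le hTU hTperp hT v
    _ ≤ c * ‖T v‖ * ‖v‖ := by gcongr; exact hc _ (Submodule.mem_map_of_mem hv)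
    _ = c * ‖v‖ * ‖T v‖ := by ring

end Real

theorem projCLM_eq_starProjection {ι : Type*} [Fintype ι]
    (W : Submodule ℝ (EuclideanSpace ℝ ι)) : projCLM W = W.starProjection := rfl

theorem sinAngle_eq_norm_starProjection_orthogonal_comp {ι : Type*} [Fintype ι]
    (V W : Submodule ℝ (EuclideanSpace ℝ ι)) :
    sinAngle V W = ‖Wᗮ.starProjection ∘L V.starProjection‖ := by
  rw [sinAngle, ← ContinuousLinearMap.adjoint.norm_map, projCLM_eq_starProjection,
    projCLM_eq_starProjection, ← W.starProjection_orthogonal,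
    ContinuousLinearMap.adjoint_comp, (isSelfAdjoint_starProjection V).adjoint_eq,
    (isSelfAdjoint_starProjection Wᗮ).adjoint_eq]

namespace Matrix

theorem PosSemidef.posSemidef_sqrt {n : Type*} [Fintype n] [DecidableEq n]
    {A : Matrix n n ℝ} (hA : A.PosSemidef) : hA.sqrt.PosSemidef := by
  have hD : (diagonal ((↑) ∘ (√·) ∘ hA.1.eigenvalues) : Matrix n n ℝ).PosSemidef :=
    posSemidef_diagonal_iff.mpr fun i ↦ Real.sqrt_nonneg _
  simpa [PosSemidef.sqrt, star_eq_conjTranspose] using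
    hD.mul_mul_conjTranspose_same hA.1.eigenvectorUnitary.1

theorem PosSemidef.sqrt_mul_self {n : Type*} [Fintype n] [DecidableEq n]
    {A : Matrix n n ℝ} (hA : A.PosSemidef) : hA.sqrt * hA.sqrt = A := by
  have hU : (star hA.1.eigenvectorUnitary : Matrix n n ℝ) * hA.1.eigenvectorUnitary.1 = 1 :=
    Unitary.coe_star_mul_self _
  have hD : (diagonal ((↑) ∘ (√·) ∘ hA.1.eigenvalues) : Matrix n n ℝ) *
      diagonal ((↑) ∘ (√·) ∘ hA.1.eigenvalues) = diagonal (RCLike.ofReal ∘ hA.1.eigenvalues) := by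
    rw [diagonal_mul_diagonal]
    congr 1; funext i
    simp [Real.mul_self_sqrt (hA.eigenvalues_nonneg i)]
  conv_rhs => rw [hA.1.spectral_theorem (𝕜 := ℝ), Unitary.conjStarAlgAut_apply]
  simp only [PosSemidef.sqrt, Matrix.mul_assoc]
  rw [← Matrix.mul_assoc _ hA.1.eigenvectorUnitary.1, hU, Matrix.one_mul, ← hD, Matrix.mul_assoc]

theorem PosSemidef.toEuclideanLin_sqrt_sqrt {n : Type*} [Fintype n] [DecidableEq n]
    {A : Matrix n n ℝ} (hA : A.PosSemidef) (x : EuclideanSpace ℝ n) :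
    toEuclideanLin hA.sqrt (toEuclideanLin hA.sqrt x) = toEuclideanLin A x := by
  conv_rhs => rw [← hA.sqrt_mul_self]
  simp [toLpLin_apply, mulVec_mulVec]

theorem IsHermitian.mul_norm_sq_le_inner_toEuclideanLin {n : Type*} [Fintype n] [DecidableEq n]
    {M : Matrix n n ℝ} (hM : M.IsHermitian) {c : ℝ} (hc : ∀ i, c ≤ hM.eigenvalues i)
    (x : EuclideanSpace ℝ n) : c * ‖x‖ ^ 2 ≤ inner ℝ (toEuclideanLin M x) x := by
  set b := hM.eigenvectorBasis
  have hMb : ∀ i, inner ℝ (toEuclideanLin M x) (b i) = hM.eigenvalues i * inner ℝ x (b i) := by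
    intro i
    have hb : toEuclideanLin M (b i) = hM.eigenvalues i • b i :=
      WithLp.ofLp_injective 2 (by simpa [toLpLin_apply] using hM.mulVec_eigenvectorBasis i)
    rw [isSymmetric_toEuclideanLin_iff.mpr hM, hb, real_inner_smul_right]
  rw [← real_inner_self_eq_norm_sq, ← b.sum_inner_mul_inner x x,
    ← b.sum_inner_mul_inner (toEuclideanLin M x) x, Finset.mul_sum]
  refine Finset.sum_le_sum fun i _ ↦ ?_
  rw [hMb, real_inner_comm x, mul_assoc]
  exact mul_le_mul_of_nonneg_right (hc i) (mul_self_nonneg _)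

theorem PosSemidef.mul_norm_le_norm_toEuclideanLin_sqrt {n : Type*} [Fintype n] [DecidableEq n]
    {A : Matrix n n ℝ} (hA : A.PosSemidef) {c : ℝ} (hc : ∀ i, c ≤ hA.1.eigenvalues i)
    (x : EuclideanSpace ℝ n) : √c * ‖x‖ ≤ ‖toEuclideanLin hA.sqrt x‖ := by
  have hsq : c * ‖x‖ ^ 2 ≤ ‖toEuclideanLin hA.sqrt x‖ ^ 2 := by
    rw [← real_inner_self_eq_norm_sq (toEuclideanLin hA.sqrt x),
      ← isSymmetric_toEuclideanLin_iff.mpr hA.posSemidef_sqrt.1, hA.toEuclideanLin_sqrt_sqrt]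
    exact hA.1.mul_norm_sq_le_inner_toEuclideanLin hc x
  simpa [Real.sqrt_mul' c (sq_nonneg ‖x‖)] using Real.sqrt_le_sqrt hsq

theorem PosSemidef.toEuclideanLin_sqrt_eq_smul {n : Type*} [Fintype n] [DecidableEq n]
    {A : Matrix n n ℝ} (hA : A.PosSemidef) {c : ℝ} (hc : 0 < c) {v : EuclideanSpace ℝ n}
    (hv : toEuclideanLin A v = c • v) : toEuclideanLin hA.sqrt v = √c • v :=
  (isPositive_toEuclideanLin_iff.mpr hA.posSemidef_sqrt).apply_eq_smul_of_apply_apply_eq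
    (Real.sqrt_pos.mpr hc) (by rw [hA.toEuclideanLin_sqrt_sqrt, hv, Real.sq_sqrt hc.le])

end Matrix

theorem sortedEig_zero_le {n : ℕ} (hn : 0 < n) {M : Matrix (Fin n) (Fin n) ℝ}
    (hM : M.IsHermitian) (i : Fin n) : sortedEig hM ⟨0, hn⟩ ≤ hM.eigenvalues i := by
  simpa [sortedEig] using Tuple.monotone_sort hM.eigenvalues
    (Fin.mk_le_of_le_val (Nat.zero_le ((Tuple.sort hM.eigenvalues)⁻¹ i)))

theorem sin_angle_rescaling_general {n : ℕ} (hn : 0 < n)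
    (N : Matrix (Fin n) (Fin n) ℝ) (hN : N.PosDef)
    (V₁ V₂ : Submodule ℝ (EuclideanSpace ℝ (Fin n)))
    (heig : ∀ v ∈ V₁, Matrix.toEuclideanLin N v = sortedEig hN.1 ⟨0, hn⟩ • v) :
    sinAngle V₂ V₁ ≤
      sinAngle (Submodule.map (Matrix.toEuclideanLin hN.posSemidef.sqrt) V₂)
        (Submodule.map (Matrix.toEuclideanLin hN.posSemidef.sqrt) V₁) := by
  have hlam : 0 < sortedEig hN.1 ⟨0, hn⟩ := hN.eigenvalues_pos _
  set μ := √(sortedEig hN.1 ⟨0, hn⟩)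
  have hμ : 0 < μ := Real.sqrt_pos.mpr hlam
  set T := Matrix.toEuclideanLin hN.posSemidef.sqrt
  have hTV₁ : ∀ u ∈ V₁, T u = μ • u := fun u hu ↦
    hN.posSemidef.toEuclideanLin_sqrt_eq_smul hlam (heig u hu)
  have hTperp : ∀ w ∈ V₁ᗮ, T w ∈ V₁ᗮ := fun w ↦
    (isSymmetric_toEuclideanLin_iff.mpr hN.posSemidef.posSemidef_sqrt.1).apply_mem_orthogonal
      fun u hu ↦ hTV₁ u hu ▸ V₁.smul_mem _ hu
  rw [sinAngle_eq_norm_starProjection_orthogonal_comp,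
    sinAngle_eq_norm_starProjection_orthogonal_comp,
    Submodule.map_eq_self_of_forall_apply_eq_smul hμ.ne' hTV₁]
  exact norm_starProjection_orthogonal_comp_le_map hμ hTV₁ hTperp
    (hN.posSemidef.mul_norm_le_norm_toEuclideanLin_sqrt (sortedEig_zero_le hn hN.1))

/-- If V₁ lies in the eigenspace of the smallest eigenvalue of the positive definite
matrix N and dim V₁ = dim V₂, then ‖sin∠(V₂,V₁)‖ ≤ ‖sin∠(N^{1/2}V₂, N^{1/2}V₁)‖. -/
theorem sin_angle_rescaling {n : ℕ} (hn : 0 < n)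
    (N : Matrix (Fin n) (Fin n) ℝ) (hN : N.PosDef)
    (V₁ V₂ : Submodule ℝ (EuclideanSpace ℝ (Fin n)))
    (hdim : Module.finrank ℝ V₁ = Module.finrank ℝ V₂)
    (heig : ∀ v ∈ V₁, Matrix.toEuclideanLin N v = sortedEig hN.1 ⟨0, hn⟩ • v) :
    sinAngle V₂ V₁ ≤
      sinAngle (Submodule.map (Matrix.toEuclideanLin hN.posSemidef.sqrt) V₂)
        (Submodule.map (Matrix.toEuclideanLin hN.posSemidef.sqrt) V₁) :=
  sin_angle_rescaling_general hn N hN V₁ V₂ heig
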